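/- Let M_E be a von Neumann algebra, X and K finite sets with |K| ≤ |X|, and f : X → K a function. If ω_XE = ⊕_{x∈X} ω_E^x ∈ ℓ¹(X) ⊗ S(M_E) is a cq-state such that the hashed state satisfies ω_{f(X)E} = (1/|K|) e_K ⊗ σ_E for some state σ_E ∈ S(M_E), then log|K| ≤ H_min(X|E)_ω. -/

import Mathlib

/-!
Common framework: quantum information theory on von Neumann algebras.

A von Neumann algebra is modelled as a subset `S` of the bounded operators on a complex
Hilbert space satisfying the double-commutant condition (`IsVNA`).  Positive normal
(σ-weakly continuous) functionals are modelled via the standard characterization: a positive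
functional on a von Neumann algebra is normal iff it is implemented by an `ℓ²`-family of
vectors, `ω(a) = ∑' n, ⟪ξ n, a (ξ n)⟫`.
-/

set_option maxHeartbeats 1000000
set_option synthInstance.maxHeartbeats 400000

noncomputable section

open scoped ComplexInnerProductSpace ComplexOrder ENNReal

universe u w

namespace VNPaper

/-- The uniformity on `PiLp` is the product uniformity, hence completeness transfers. -/
instance piLpCompleteSpace {ι : Type} {p : ℝ≥0∞} {β : ι → Type w} [∀ i, UniformSpace (β i)]
    [∀ i, CompleteSpace (β i)] : CompleteSpace (PiLp p β) :=
  (PiLp.uniformEquiv p β).completeSpace_iff.2 inferInstance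

/-- The uniformity on `WithLp p (α × β)` is the product uniformity, hence completeness
transfers. -/
instance withLpProdCompleteSpace {p : ℝ≥0∞} {α : Type u} {β : Type w} [UniformSpace α]
    [UniformSpace β] [CompleteSpace α] [CompleteSpace β] : CompleteSpace (WithLp p (α × β)) :=
  (WithLp.uniformEquivProd p α β).completeSpace_iff.2 inferInstance

section Poly

variable {W : Type w} [NormedAddCommGroup W] [InnerProductSpace ℂ W] [CompleteSpace W]

/-- A bounded operator is positive iff `⟪v, a v⟫ ≥ 0` for all vectors `v`. -/
def IsPosOp (a : W →L[ℂ] W) : Prop := ∀ v : W, 0 ≤ ⟪v, a v⟫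

/-- `S ⊆ B(W)` is a von Neumann algebra: a unital ⋆-subalgebra equal to its double
commutant. -/
def IsVNA (S : Set (W →L[ℂ] W)) : Prop :=
  (1 : W →L[ℂ] W) ∈ S ∧
    (∀ a ∈ S, ∀ b ∈ S, a + b ∈ S) ∧
    (∀ c : ℂ, ∀ a ∈ S, c • a ∈ S) ∧
    (∀ a ∈ S, ∀ b ∈ S, a * b ∈ S) ∧
    (∀ a ∈ S, star a ∈ S) ∧
    Set.centralizer (Set.centralizer S) = S

/-- A positive normal functional on a von Neumann algebra `S ⊆ B(W)`, described by its
values on operators, together with a witness (an `ℓ²`-family of implementing vectors) of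
positivity and σ-weak continuity (normality).  This is the standard characterization of
positive normal functionals on a von Neumann algebra. -/
structure NormalPF (S : Set (W →L[ℂ] W)) where
  val : (W →L[ℂ] W) → ℂ
  normal : ∃ ξ : ℕ → W, Summable (fun m => ‖ξ m‖ ^ 2) ∧
    ∀ a ∈ S, val a = ∑' m, ⟪ξ m, a (ξ m)⟫

namespace NormalPF

variable {S : Set (W →L[ℂ] W)}

/-- Subnormalized states: `ω(1) ≤ 1`. -/
def IsSubnormalized (ω : NormalPF S) : Prop := (ω.val 1).re ≤ 1

/-- Normalized states: `ω(1) = 1`. -/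
def IsState (ω : NormalPF S) : Prop := ω.val 1 = 1

end NormalPF

/-- The norm of a (difference of) functional(s) on `S`, i.e. the norm in the predual:
`‖φ‖ = sup { |φ(x)| : x ∈ S, ‖x‖ ≤ 1 }`. -/
def funcNorm (S : Set (W →L[ℂ] W)) (φ : (W →L[ℂ] W) → ℂ) : ℝ :=
  sSup { r : ℝ | ∃ a ∈ S, ‖a‖ ≤ 1 ∧ r = ‖φ a‖ }

/-- The operator `(x_{ij})` of an `ι × ι` matrix of operators on `W`, acting on the
Hilbert space `ℓ²(ι) ⊗ W = ⊕_{i ∈ ι} W`; this realizes `M_ι(B(W))`. -/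
def matOp {ι : Type} [Fintype ι] (x : Matrix ι ι (W →L[ℂ] W)) :
    PiLp 2 (fun _ : ι => W) →L[ℂ] PiLp 2 (fun _ : ι => W) :=
  ((PiLp.continuousLinearEquiv 2 ℂ (fun _ : ι => W)).symm.toContinuousLinearMap) ∘L
    (ContinuousLinearMap.pi fun i => ∑ j, (x i j) ∘L (ContinuousLinearMap.proj j)) ∘L
    ((PiLp.continuousLinearEquiv 2 ℂ (fun _ : ι => W)).toContinuousLinearMap)

/-- The operator `E_{ij} ⊗ b` (matrix unit tensor an operator). -/
def matUnit {ι : Type} [Fintype ι] [DecidableEq ι] (i j : ι) (b : W →L[ℂ] W) :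
    PiLp 2 (fun _ : ι => W) →L[ℂ] PiLp 2 (fun _ : ι => W) :=
  matOp (Matrix.single i j b)

/-- The bipartite von Neumann algebra `M_A ⊗ M_B = M_ι(M)`, where the system `A` is the
finite-dimensional matrix algebra `M_ι` and `B` is described by the von Neumann algebra
`M ⊆ B(W)`; its elements are the matrices with entries in `M`. -/
def matrixAlgebra (ι : Type) [Fintype ι] (M : Set (W →L[ℂ] W)) :
    Set (PiLp 2 (fun _ : ι => W) →L[ℂ] PiLp 2 (fun _ : ι => W)) :=
  { T | ∃ x : Matrix ι ι (W →L[ℂ] W), (∀ i j, x i j ∈ M) ∧ T = matOp x }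

/-- A state on `M_ι(M)` is a classical-quantum (cq) state (i.e. comes from a state on
`ℓ^∞(ι) ⊗ M`) if it is supported on the diagonal. -/
def IsCQ {ι : Type} [Fintype ι] [DecidableEq ι] {M : Set (W →L[ℂ] W)}
    (ω : NormalPF (matrixAlgebra ι M)) : Prop :=
  ∀ x : Matrix ι ι (W →L[ℂ] W), (∀ i j, x i j ∈ M) →
    ω.val (matOp x) = ∑ i, ω.val (matUnit i i (x i i))

/-- The conditional min-entropy `H_min(A|B)_φ = sup_{σ ∈ S(M_B)} (- D_max(φ ‖ τ_A ⊗ σ))`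
of a functional `φ` on the bipartite algebra `M_ι(M)`.  Here
`- D_max(φ ‖ τ_A ⊗ σ) = sup { r : φ ≤ 2^{-r} · (τ_A ⊗ σ) }`, where `τ_A` is the
(unnormalized) trace on `M_ι` and the ordering of functionals is tested on the positive
elements of the algebra. -/
def Hmin (ι : Type) [Fintype ι] (M : Set (W →L[ℂ] W))
    (φ : (PiLp 2 (fun _ : ι => W) →L[ℂ] PiLp 2 (fun _ : ι => W)) → ℂ) : ℝ :=
  sSup { r : ℝ | ∃ σ : NormalPF M, σ.IsState ∧
    ∀ x : Matrix ι ι (W →L[ℂ] W), (∀ i j, x i j ∈ M) → IsPosOp (matOp x) →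
      (φ (matOp x)).re ≤ (2 : ℝ) ^ (-r) * ∑ i, (σ.val (x i i)).re }

/-- The system `A ∨ C` generated by a family of matrix units `e : ι × ι → B(L)` (an
`ι`-dimensional system `A`) and a commuting von Neumann algebra `C ⊆ B(L)`. -/
def pairAlgebra {ι : Type} [Fintype ι] (e : ι → ι → (W →L[ℂ] W)) (C : Set (W →L[ℂ] W)) :
    Set (W →L[ℂ] W) :=
  { T | ∃ c : Matrix ι ι (W →L[ℂ] W), (∀ i j, c i j ∈ C) ∧ T = ∑ i, ∑ j, e i j * c i j }

/-- The conditional min-entropy `H_min(A|C)_φ` where the `ι`-dimensional system `A` is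
given by matrix units `e` and the system `C` by a commuting von Neumann algebra
`C ⊆ B(L)`: `H_min(A|C)_φ = sup_{σ ∈ S(C)} (- D_max(φ ‖ τ_A ⊗ σ))`. -/
def HminPair {ι : Type} [Fintype ι] (e : ι → ι → (W →L[ℂ] W)) (C : Set (W →L[ℂ] W))
    (φ : (W →L[ℂ] W) → ℂ) : ℝ :=
  sSup { r : ℝ | ∃ σ : NormalPF C, σ.IsState ∧
    ∀ c : Matrix ι ι (W →L[ℂ] W), (∀ i j, c i j ∈ C) →
      IsPosOp (∑ i, ∑ j, e i j * c i j) →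
      (φ (∑ i, ∑ j, e i j * c i j)).re ≤ (2 : ℝ) ^ (-r) * ∑ i, (σ.val (c i i)).re }

/-- The (subnormalized) state implemented by the vector `ξ`, i.e. `a ↦ ⟪ξ, a ξ⟫`. -/
def vecState (S : Set (W →L[ℂ] W)) (ξ : W) : NormalPF S where
  val a := ⟪ξ, a ξ⟫
  normal := by
    refine ⟨fun m => if m = 0 then ξ else 0, ?_, ?_⟩
    · refine summable_of_ne_finset_zero (s := {0}) ?_
      intro m hm
      have hm' : m ≠ 0 := by simpa using hm
      simp [hm']
    · intro a _
      rw [tsum_eq_single 0 ?_]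
      · simp
      · intro m hm
        simp [hm]

end Poly

section RepBased

variable {K : Type u} [NormedAddCommGroup K] [InnerProductSpace ℂ K] [CompleteSpace K]

/-- A (normal, unital) representation of the von Neumann algebra `S ⊆ B(K)` on another
Hilbert space `L'`.  Normality is encoded by requiring that all vector functionals pull
back to normal functionals. -/
structure Rep (S : Set (K →L[ℂ] K)) (L' : Type u) [NormedAddCommGroup L']
    [InnerProductSpace ℂ L'] [CompleteSpace L'] where
  app : (K →L[ℂ] K) → (L' →L[ℂ] L')
  map_one : app 1 = 1
  map_add : ∀ a ∈ S, ∀ b ∈ S, app (a + b) = app a + app b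
  map_smul : ∀ c : ℂ, ∀ a ∈ S, app (c • a) = c • app a
  map_mul : ∀ a ∈ S, ∀ b ∈ S, app (a * b) = app a * app b
  map_star : ∀ a ∈ S, app (star a) = star (app a)
  normal : ∀ η : L', ∃ ξ : ℕ → K, Summable (fun m => ‖ξ m‖ ^ 2) ∧
    ∀ a ∈ S, ⟪η, app a η⟫ = ∑' m, ⟪ξ m, a (ξ m)⟫

/-- `(π, L', ξ)` is a purification of `ω ∈ S≤(S)`: `ω(a) = ⟪ξ, π(a) ξ⟫` for all `a ∈ S`. -/
def IsPurification {S : Set (K →L[ℂ] K)} {L' : Type u} [NormedAddCommGroup L']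
    [InnerProductSpace ℂ L'] [CompleteSpace L'] (ω : NormalPF S) (π : Rep S L') (ξ : L') :
    Prop :=
  ∀ a ∈ S, ω.val a = ⟪ξ, π.app a ξ⟫

/-- The fidelity `F(ω, σ) = sup_π |⟪ξ_ω^π, ξ_σ^π⟫|²`, the supremum running over all
representations of `S` admitting simultaneous purifying vectors for `ω` and `σ`. -/
def fidelity (S : Set (K →L[ℂ] K)) (ω σ : NormalPF S) : ℝ :=
  sSup { r : ℝ | ∃ (L' : Type u) (_ : NormedAddCommGroup L') (_ : InnerProductSpace ℂ L')
    (_ : CompleteSpace L') (π : Rep S L') (ξω ξσ : L'),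
    IsPurification ω π ξω ∧ IsPurification σ π ξσ ∧ r = ‖⟪ξω, ξσ⟫‖ ^ 2 }

/-- The generalized fidelity of two subnormalized states, given by the closed formula
`𝓕(ω,σ)^{1/2} = F(ω,σ)^{1/2} + (1-ω(1))^{1/2}(1-σ(1))^{1/2}`. -/
def gFid (S : Set (K →L[ℂ] K)) (ω σ : NormalPF S) : ℝ :=
  (Real.sqrt (fidelity S ω σ) +
    Real.sqrt (1 - (ω.val 1).re) * Real.sqrt (1 - (σ.val 1).re)) ^ 2

/-- The purified distance `𝓟(ω,σ) = sqrt(1 - 𝓕(ω,σ))`. -/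
def pDist (S : Set (K →L[ℂ] K)) (ω σ : NormalPF S) : ℝ :=
  Real.sqrt (1 - gFid S ω σ)

variable {H : Type u} [NormedAddCommGroup H] [InnerProductSpace ℂ H] [CompleteSpace H]

/-- The conditional max-entropy `H_max(A|B)_ω = - H_min(A'|C)_ω`, computed in an
arbitrary purification `(π, L', ξ)` of `ω`, where the relevant system `A'` is given by the
matrix units `π(E_{ij} ⊗ 1)` and the complementary system is `C = π(M_{AB})'` (this value
is independent of the chosen purification). -/
def Hmax (ι : Type) [Fintype ι] [DecidableEq ι] (M : Set (H →L[ℂ] H))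
    (ω : NormalPF (matrixAlgebra ι M)) : ℝ :=
  sSup { h : ℝ | ∃ (L' : Type u) (_ : NormedAddCommGroup L') (_ : InnerProductSpace ℂ L')
    (_ : CompleteSpace L') (π : Rep (matrixAlgebra ι M) L') (ξ : L'),
    IsPurification ω π ξ ∧
    h = - HminPair (fun i j => π.app (matUnit i j 1))
      (Set.centralizer (π.app '' (matrixAlgebra ι M))) (fun T => ⟪ξ, T ξ⟫) }

/-- The ε-smooth conditional min-entropy: supremum of `H_min(A|B)` over the
purified-distance ε-ball of subnormalized states. -/
def sHmin (ι : Type) [Fintype ι] (M : Set (H →L[ℂ] H))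
    (ω : NormalPF (matrixAlgebra ι M)) (ε : ℝ) : ℝ :=
  sSup { h : ℝ | ∃ ω' : NormalPF (matrixAlgebra ι M), ω'.IsSubnormalized ∧
    pDist (matrixAlgebra ι M) ω ω' ≤ ε ∧ h = Hmin ι M ω'.val }

/-- The ε-smooth conditional max-entropy: infimum of `H_max(A|B)` over the
purified-distance ε-ball of subnormalized states. -/
def sHmax (ι : Type) [Fintype ι] [DecidableEq ι] (M : Set (H →L[ℂ] H))
    (ω : NormalPF (matrixAlgebra ι M)) (ε : ℝ) : ℝ :=
  sInf { h : ℝ | ∃ ω' : NormalPF (matrixAlgebra ι M), ω'.IsSubnormalized ∧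
    pDist (matrixAlgebra ι M) ω ω' ≤ ε ∧ h = Hmax ι M ω' }

/-- The ε-smooth conditional min-entropy `H_min^ε(A|C)` in the "pair" picture: the system
`A` is given by matrix units `e` on `L'` and `C` is a commuting von Neumann algebra. -/
def sHminPair {L' : Type u} [NormedAddCommGroup L'] [InnerProductSpace ℂ L']
    [CompleteSpace L'] {ι : Type} [Fintype ι] (e : ι → ι → (L' →L[ℂ] L'))
    (C : Set (L' →L[ℂ] L')) (ω : NormalPF (pairAlgebra e C)) (ε : ℝ) : ℝ :=
  sSup { h : ℝ | ∃ ω' : NormalPF (pairAlgebra e C), ω'.IsSubnormalized ∧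
    pDist (pairAlgebra e C) ω ω' ≤ ε ∧ h = HminPair e C ω'.val }

/-- A quantum channel from the system described by `S ⊆ B(K')` to the system described by
`T ⊆ B(L')`, i.e. a normal, completely positive, unital linear map `𝓔 : T → S` (Heisenberg
picture). -/
structure Channel {K' : Type u} [NormedAddCommGroup K'] [InnerProductSpace ℂ K']
    [CompleteSpace K'] {L' : Type w} [NormedAddCommGroup L'] [InnerProductSpace ℂ L']
    [CompleteSpace L'] (S : Set (K' →L[ℂ] K')) (T : Set (L' →L[ℂ] L')) where
  app : (L' →L[ℂ] L') → (K' →L[ℂ] K')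
  mem : ∀ a ∈ T, app a ∈ S
  map_one : app 1 = 1
  map_add : ∀ a ∈ T, ∀ b ∈ T, app (a + b) = app a + app b
  map_smul : ∀ c : ℂ, ∀ a ∈ T, app (c • a) = c • app a
  cp : ∀ (n : ℕ) (c : Matrix (Fin n) (Fin n) (L' →L[ℂ] L')), (∀ i j, c i j ∈ T) →
    IsPosOp (matOp c) → IsPosOp (matOp (fun i j => app (c i j)))
  normal : ∀ ω : NormalPF S, ∃ η : ℕ → L', Summable (fun m => ‖η m‖ ^ 2) ∧
    ∀ a ∈ T, ω.val (app a) = ∑' m, ⟪η m, a (η m)⟫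

/-- The predual (Schrödinger picture) action of a quantum channel on normal states. -/
def Channel.predual {K' : Type u} [NormedAddCommGroup K'] [InnerProductSpace ℂ K']
    [CompleteSpace K'] {L' : Type w} [NormedAddCommGroup L'] [InnerProductSpace ℂ L']
    [CompleteSpace L'] {S : Set (K' →L[ℂ] K')} {T : Set (L' →L[ℂ] L')}
    (E : Channel S T) (ω : NormalPF S) : NormalPF T :=
  ⟨fun a => ω.val (E.app a), E.normal ω⟩

end RepBased

/-!
Hashing can only lose min-entropy: for a cq-state `ω_XE` with `ω_{f(X)E} = |K|⁻¹ e_K ⊗ σ_E`,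
each block `ω_E^x` is dominated by the whole fibre `∑_{f x' = f x} ω_E^{x'} = |K|⁻¹ σ_E`,
so `ω_XE ≤ |K|⁻¹ (τ_X ⊗ σ_E)` and `σ_E` witnesses `log |K| ≤ H_min(X|E)_ω`.  Testing
`ω ≤ 2^{-r} (τ ⊗ σ')` against `1` bounds every such `r` by `log |X|`, so the supremum defining
`H_min` is not the junk value of an unbounded set.
-/

section MinEntropy

variable {W : Type w} [NormedAddCommGroup W] [InnerProductSpace ℂ W] {ι : Type} [Fintype ι]

lemma matOp_apply (x : Matrix ι ι (W →L[ℂ] W)) (v : PiLp 2 (fun _ : ι => W)) (i : ι) :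
    matOp x v i = ∑ j, x i j (v j) := by
  simp [matOp]

lemma inner_matOp (x : Matrix ι ι (W →L[ℂ] W)) (v : PiLp 2 (fun _ : ι => W)) :
    ⟪v, matOp x v⟫ = ∑ i, ∑ j, ⟪v i, x i j (v j)⟫ := by
  rw [PiLp.inner_apply]
  exact Finset.sum_congr rfl fun i _ => by rw [matOp_apply, inner_sum]

lemma isPosOp_one : IsPosOp (1 : W →L[ℂ] W) := fun v => by
  change 0 ≤ ⟪v, v⟫
  rw [inner_self_eq_norm_sq_to_K]
  positivity

lemma NormalPF.re_val_nonneg {S : Set (W →L[ℂ] W)} (ω : NormalPF S) {a : W →L[ℂ] W}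
    (ha : a ∈ S) (hpos : IsPosOp a) : 0 ≤ (ω.val a).re := by
  obtain ⟨ξ, -, hval⟩ := ω.normal
  rw [hval a ha]
  by_cases hs : Summable fun m => ⟪ξ m, a (ξ m)⟫
  · rw [Complex.re_tsum hs]
    exact tsum_nonneg fun m => (Complex.le_def.mp (hpos (ξ m))).1
  · simp [tsum_eq_zero_of_not_summable hs]

/-- `φ ≤ 2^{-r} (τ ⊗ σ)` on the positive cone of `M_ι(M)`, i.e. `D_max(φ ‖ τ ⊗ σ) ≤ -r`. -/
def DmaxLe (M : Set (W →L[ℂ] W))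
    (φ : (PiLp 2 (fun _ : ι => W) →L[ℂ] PiLp 2 (fun _ : ι => W)) → ℂ)
    (σ : NormalPF M) (r : ℝ) : Prop :=
  ∀ x : Matrix ι ι (W →L[ℂ] W), (∀ i j, x i j ∈ M) → IsPosOp (matOp x) →
    (φ (matOp x)).re ≤ (2 : ℝ) ^ (-r) * ∑ i, (σ.val (x i i)).re

lemma Hmin_eq_sSup_dmaxLe (M : Set (W →L[ℂ] W))
    (φ : (PiLp 2 (fun _ : ι => W) →L[ℂ] PiLp 2 (fun _ : ι => W)) → ℂ) :
    Hmin ι M φ = sSup {r | ∃ σ : NormalPF M, σ.IsState ∧ DmaxLe M φ σ r} := rfl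

variable [DecidableEq ι]

lemma matOp_one : matOp (1 : Matrix ι ι (W →L[ℂ] W)) = 1 := by
  ext v i
  simp [matOp_apply, Matrix.one_apply, apply_ite, ite_apply]

lemma inner_matUnit (i : ι) (b : W →L[ℂ] W) (v : PiLp 2 (fun _ : ι => W)) :
    ⟪v, matUnit i i b v⟫ = ⟪v i, b (v i)⟫ := by
  rw [matUnit, inner_matOp]
  simp [Matrix.single, apply_ite, ite_apply, ite_and]

lemma IsPosOp.diag {x : Matrix ι ι (W →L[ℂ] W)} (hx : IsPosOp (matOp x)) (i : ι) :
    IsPosOp (x i i) := fun w => by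
  simpa [inner_matOp, Pi.single_apply, apply_ite, ite_apply, apply_ite (inner ℂ)] using
    hx (WithLp.toLp 2 (Pi.single i w))

lemma IsPosOp.matUnit (i : ι) {b : W →L[ℂ] W} (hb : IsPosOp b) :
    IsPosOp (matUnit i i b) := fun v => by
  rw [inner_matUnit]
  exact hb (v i)

lemma matUnit_mem_matrixAlgebra {M : Set (W →L[ℂ] W)} (h0 : 0 ∈ M) (i j : ι)
    {b : W →L[ℂ] W} (hb : b ∈ M) : matUnit i j b ∈ matrixAlgebra ι M := by
  refine ⟨Matrix.single i j b, fun i' j' => ?_, rfl⟩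
  by_cases h : i = i' ∧ j = j'
  · obtain ⟨rfl, rfl⟩ := h
    simpa using hb
  · simpa [Matrix.single, h] using h0

variable {M : Set (W →L[ℂ] W)} {ω : NormalPF (matrixAlgebra ι M)} {σ : NormalPF M} {r : ℝ}

lemma IsCQ.dmaxLe (hcq : IsCQ ω)
    (h : ∀ i, ∀ b ∈ M, IsPosOp b → (ω.val (matUnit i i b)).re ≤ (2 : ℝ) ^ (-r) * (σ.val b).re) :
    DmaxLe M ω.val σ r := by
  intro x hx hpos
  rw [hcq x hx, Complex.re_sum, Finset.mul_sum]
  exact Finset.sum_le_sum fun i _ => h i _ (hx i i) (hpos.diag i)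

variable [CompleteSpace W]

lemma IsVNA.zero_mem {M : Set (W →L[ℂ] W)} (hM : IsVNA M) : (0 : W →L[ℂ] W) ∈ M := by
  simpa using hM.2.2.1 0 1 hM.1

lemma DmaxLe.one_le_mul_card (hM : IsVNA M) (hω : ω.IsState) (hσ : σ.IsState)
    (h : DmaxLe M ω.val σ r) : 1 ≤ (2 : ℝ) ^ (-r) * Fintype.card ι := by
  have h1 : ∀ i j, (1 : Matrix ι ι (W →L[ℂ] W)) i j ∈ M := fun i j => by
    by_cases hij : i = j
    · simpa [Matrix.one_apply, hij] using hM.1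
    · simpa [Matrix.one_apply, hij] using hM.zero_mem
  have := h 1 h1 (by rw [matOp_one]; exact isPosOp_one)
  rw [matOp_one, show ω.val 1 = 1 from hω] at this
  simpa [Matrix.one_apply, show σ.val 1 = 1 from hσ] using this

lemma DmaxLe.le_logb_card (hM : IsVNA M) (hω : ω.IsState) (hσ : σ.IsState)
    (h : DmaxLe M ω.val σ r) : r ≤ Real.logb 2 (Fintype.card ι) := by
  have hbound := h.one_le_mul_card hM hω hσ
  have hcard : (0 : ℝ) < Fintype.card ι := by
    by_contra! h0
    nlinarith [Real.rpow_pos_of_pos two_pos (-r)]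
  rw [Real.le_logb_iff_rpow_le one_lt_two hcard]
  rw [Real.rpow_neg zero_le_two, ← div_eq_inv_mul, one_le_div₀ (by positivity)] at hbound
  exact hbound

lemma le_Hmin (hM : IsVNA M) (hω : ω.IsState) (hσ : σ.IsState) (h : DmaxLe M ω.val σ r) :
    r ≤ Hmin ι M ω.val := by
  refine le_csSup ⟨Real.logb 2 (Fintype.card ι), ?_⟩ ⟨σ, hσ, h⟩
  rintro r' ⟨σ', hσ', h'⟩
  exact DmaxLe.le_logb_card hM hω hσ' h'

lemma Hmin_of_isEmpty [IsEmpty ι] (hM : IsVNA M) (hω : ω.IsState) : Hmin ι M ω.val = 0 := by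
  rw [Hmin_eq_sSup_dmaxLe, ← Real.sSup_empty]
  congr 1
  refine Set.eq_empty_of_forall_notMem ?_
  rintro r ⟨σ', hσ', h⟩
  have := h.one_le_mul_card hM hω hσ'
  norm_num at this

end MinEntropy

theorem perfect_key_length_bounded_by_Hmin_general
    {H : Type u} [NormedAddCommGroup H] [InnerProductSpace ℂ H] [CompleteSpace H]
    (X Kt : Type) [Fintype X] [DecidableEq X] [Fintype Kt] [DecidableEq Kt]
    (M : Set (H →L[ℂ] H)) (hM : IsVNA M)
    (f : X → Kt)
    (ω : NormalPF (matrixAlgebra X M)) (hcq : IsCQ ω) (hst : ω.IsState)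
    (σ : NormalPF M) (hσ : σ.IsState)
    (hkey : ∀ k : Kt, ∀ b ∈ M,
      (∑ x ∈ Finset.univ.filter fun x => f x = k, ω.val (matUnit x x b)) =
        (1 / (Fintype.card Kt : ℂ)) * σ.val b) :
    Real.logb 2 (Fintype.card Kt) ≤ Hmin X M ω.val := by
  rcases isEmpty_or_nonempty Kt with hK | hK
  · have : IsEmpty X := f.isEmpty
    simp [Hmin_of_isEmpty hM hst, Fintype.card_eq_zero]
  refine le_Hmin hM hst hσ (hcq.dmaxLe fun x b hb hpos => ?_)
  have hscale : (2 : ℝ) ^ (-Real.logb 2 (Fintype.card Kt)) = (Fintype.card Kt : ℝ)⁻¹ := by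
    rw [Real.rpow_neg zero_le_two, Real.rpow_logb two_pos (by norm_num) (by positivity)]
  have hfibre : ∑ x' ∈ Finset.univ.filter fun x' => f x' = f x,
      (ω.val (matUnit x' x' b)).re = (Fintype.card Kt : ℝ)⁻¹ * (σ.val b).re := by
    rw [← Complex.re_sum, hkey (f x) b hb, one_div, ← Complex.ofReal_natCast,
      ← Complex.ofReal_inv, Complex.re_ofReal_mul]
  rw [hscale, ← hfibre]
  exact Finset.single_le_sum (f := fun x' => (ω.val (matUnit x' x' b)).re)
    (fun x' _ => ω.re_val_nonneg (matUnit_mem_matrixAlgebra hM.zero_mem x' x' hb)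
      (hpos.matUnit x')) (by simp)

/-- Converse for privacy amplification: if applying `f : X → K` to the
classical part of the cq-state `ω_XE` yields a perfectly uniform key decoupled from `E`,
i.e. `ω_{f(X)E} = (1/|K|) e_K ⊗ σ_E` for some state `σ_E`, then
`log₂ |K| ≤ H_min(X|E)_ω`. -/
theorem perfect_key_length_bounded_by_Hmin
    {H : Type u} [NormedAddCommGroup H] [InnerProductSpace ℂ H] [CompleteSpace H]
    (X Kt : Type) [Fintype X] [DecidableEq X] [Fintype Kt] [DecidableEq Kt]
    (hcard : Fintype.card Kt ≤ Fintype.card X)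
    (M : Set (H →L[ℂ] H)) (hM : IsVNA M)
    (f : X → Kt)
    (ω : NormalPF (matrixAlgebra X M)) (hcq : IsCQ ω) (hst : ω.IsState)
    (σ : NormalPF M) (hσ : σ.IsState)
    (hkey : ∀ k : Kt, ∀ b ∈ M,
      (∑ x ∈ Finset.univ.filter fun x => f x = k, ω.val (matUnit x x b)) =
        (1 / (Fintype.card Kt : ℂ)) * σ.val b) :
    Real.logb 2 (Fintype.card Kt) ≤ Hmin X M ω.val :=
  perfect_key_length_bounded_by_Hmin_general X Kt M hM f ω hcq hst σ hσ hkey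

end VNPaper
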